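/- The average AoI of the network admits the closed form (1/(nT)) Σ_{v ∈ V} ∫₀^T A(v,t) dt = (1/(nT)) Σ_{v ∈ V} Σ_{j=1}^{k_v+1} (2·A_{v,j−1} + Λ_{v,j})·Λ_{v,j} / 2, where for each vertex v: A_{v,0} = A₀ and A_{v,j} = 1 + dist(s_{i_j}, v) for 1 ≤ j ≤ k_v; Λ_{v,1} = 1 + (i₁ − 1)Δ + dist(s_{i₁}, v) = τ₁(v); Λ_{v,j} = τ_j(v) − τ_{j−1}(v) = (i_j − i_{j−1})Δ + dist(s_{i_j},v) − dist(s_{i_{j−1}},v) for 2 ≤ j ≤ k_v; and Λ_{v,k_v+1} = T − τ_{k_v}(v) = T − 1 − (k − 1)Δ − dist(s_k, v). -/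

import Mathlib

/-!
The update rule amounts to `A(t+1) = min (A(t) + 1) (1 + d_j)` over the seeds `j` arriving at
`t + 1`, so `A(t)` is the minimum of `A₀ + t` and of `t + 1 - t_j` over the seeds already arrived.
Every arrived seed is dominated by a surviving seed that is at least as fresh and has arrived no
later, so for `τ_m ≤ t < τ_{m+1}` (or `τ_{k_v} ≤ t`) the age is `t + 1 - t_{i_m}`, and before
`τ_1` it is `A₀ + t`. Thus the age grows with slope one on each of the `k_v + 1` blocks
`[τ_{j-1}, τ_j)`; a block of length `Λ` starting at height `a` contributes `(2a + Λ)Λ/2`, and the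
piecewise linear `AoIR` integrates over `[0, T]` to the sum of `A(t) + 1/2` over integers `t < T`.
-/

open Finset

def tsel (Δ j : ℕ) : ℕ := (j - 1) * Δ + 1

noncomputable def AoI {V : Type*} (G : SimpleGraph V) (s : ℕ → V) (Δ k A0 : ℕ) (v : V) :
    ℕ → ℕ
  | 0 => A0
  | t + 1 =>
    let prev := AoI G s Δ k A0 v t
    let Ω : Finset ℕ := (Finset.Icc 1 k).filter
      (fun j => t + 1 = tsel Δ j + G.dist (s j) v ∧ G.dist (s j) v + 1 ≤ prev)
    if h : Ω.Nonempty then Ω.inf' h (fun j => 1 + G.dist (s j) v) else prev + 1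

noncomputable def AoIR {V : Type*} (G : SimpleGraph V) (s : ℕ → V) (Δ k A0 : ℕ) (v : V)
    (t : ℝ) : ℝ :=
  (AoI G s Δ k A0 v ⌊t⌋₊ : ℝ) + (t - ⌊t⌋₊)

open scoped Classical in
noncomputable def Dset {V : Type*} (G : SimpleGraph V) (s : ℕ → V) (Δ k : ℕ) (v : V) :
    Finset ℕ :=
  (Finset.Icc 1 k).filter (fun x => ∀ y ∈ Finset.Icc 1 k, x < y →
    tsel Δ x + G.dist (s x) v < tsel Δ y + G.dist (s y) v)


section FloorSawtooth

open MeasureTheory Set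

lemma eqOn_floor_sawtooth (a : ℕ → ℝ) (n : ℕ) :
    EqOn (fun t : ℝ => a ⌊t⌋₊ + (t - ⌊t⌋₊)) (fun t => a n - n + t) (Ioo n (n + 1)) := by
  intro t ⟨hnt, htn⟩
  have hfloor : ⌊t⌋₊ = n := (Nat.floor_eq_iff ((Nat.cast_nonneg n).trans hnt.le)).2 ⟨hnt.le, htn⟩
  simp only [hfloor]
  ring

lemma intervalIntegrable_floor_sawtooth (a : ℕ → ℝ) (n : ℕ) :
    IntervalIntegrable (fun t : ℝ => a ⌊t⌋₊ + (t - ⌊t⌋₊)) volume n (n + 1) := by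
  rw [intervalIntegrable_iff_integrableOn_Ioc_of_le (by linarith),
    integrableOn_Ioc_iff_integrableOn_Ioo]
  exact (continuous_const.add continuous_id).integrableOn_Icc.mono_set Ioo_subset_Icc_self
    |>.congr_fun (eqOn_floor_sawtooth a n).symm measurableSet_Ioo

lemma integral_floor_sawtooth_unit (a : ℕ → ℝ) (n : ℕ) :
    ∫ t in (n : ℝ)..(n + 1), (a ⌊t⌋₊ + (t - ⌊t⌋₊)) = a n + 1 / 2 := by
  have hn : (n : ℝ) ≤ n + 1 := by linarith
  have hcongr : ∫ t in (n : ℝ)..(n + 1), (a ⌊t⌋₊ + (t - ⌊t⌋₊))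
      = ∫ t in (n : ℝ)..(n + 1), (a n - n + t) := by
    rw [intervalIntegral.integral_of_le hn, intervalIntegral.integral_of_le hn,
      integral_Ioc_eq_integral_Ioo, integral_Ioc_eq_integral_Ioo]
    exact setIntegral_congr_fun measurableSet_Ioo (eqOn_floor_sawtooth a n)
  rw [hcongr, intervalIntegral.integral_add intervalIntegrable_const
    (continuous_id'.intervalIntegrable _ _)]
  simp only [intervalIntegral.integral_const, integral_id, smul_eq_mul]
  ring

lemma integral_floor_sawtooth (a : ℕ → ℝ) (N : ℕ) :
    ∫ t in (0 : ℝ)..N, (a ⌊t⌋₊ + (t - ⌊t⌋₊)) = ∑ n ∈ Finset.range N, (a n + 1 / 2) := by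
  have h := intervalIntegral.sum_integral_adjacent_intervals (a := fun n : ℕ => (n : ℝ))
    (μ := volume) (n := N) (f := fun t : ℝ => a ⌊t⌋₊ + (t - ⌊t⌋₊))
    (fun n _ => by simpa using intervalIntegrable_floor_sawtooth a n)
  simp only [Nat.cast_zero, Nat.cast_succ, integral_floor_sawtooth_unit] at h
  exact h.symm

end FloorSawtooth

lemma sum_range_eq_sum_Icc_sum_Ico {M : Type*} [AddCommMonoid M] (f : ℕ → M) {b : ℕ → ℕ}
    (hb : Monotone b) (hb0 : b 0 = 0) (n : ℕ) :
    ∑ t ∈ range (b n), f t = ∑ j ∈ Icc 1 n, ∑ t ∈ Ico (b (j - 1)) (b j), f t := by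
  induction n with
  | zero => simp [hb0]
  | succ n ih =>
    rw [sum_Icc_succ_top (Nat.le_add_left 1 n), ← ih, Nat.add_sub_cancel, range_eq_Ico,
      range_eq_Ico, ← hb0, sum_Ico_consecutive _ (hb n.zero_le) (hb n.le_succ)]

lemma sum_Ico_add_half_of_eq (c : ℝ) {a b : ℕ} (hab : a ≤ b) {f : ℕ → ℝ}
    (hf : ∀ t ∈ Ico a b, f t = c + ((t : ℝ) - a)) :
    ∑ t ∈ Ico a b, (f t + 1 / 2) = (2 * c + ((b : ℝ) - a)) * ((b : ℝ) - a) / 2 := by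
  rw [sum_congr rfl fun t ht => by rw [hf t ht]]
  clear hf
  obtain ⟨L, rfl⟩ := Nat.exists_eq_add_of_le hab
  induction L with
  | zero => simp
  | succ L ih =>
    rw [← add_assoc, sum_Ico_succ_top (Nat.le_add_right a L), ih (Nat.le_add_right a L)]
    push_cast
    ring

def blockBound (τ : ℕ → ℕ) (n T j : ℕ) : ℕ := if j = 0 then 0 else if j ≤ n then τ j else T

lemma blockBound_zero (τ : ℕ → ℕ) (n T : ℕ) : blockBound τ n T 0 = 0 := rfl

lemma blockBound_of_le {τ : ℕ → ℕ} {n T j : ℕ} (hj1 : 1 ≤ j) (hjn : j ≤ n) :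
    blockBound τ n T j = τ j := by
  rw [blockBound, if_neg (Nat.one_le_iff_ne_zero.1 hj1), if_pos hjn]

lemma blockBound_of_lt {τ : ℕ → ℕ} {n T j : ℕ} (hnj : n < j) : blockBound τ n T j = T := by
  rw [blockBound, if_neg (by omega), if_neg (by omega)]

lemma blockBound_monotone {τ : ℕ → ℕ} {n T : ℕ} (hτ : MonotoneOn τ (Set.Icc 1 n))
    (hT : τ n ≤ T) : Monotone (blockBound τ n T) := by
  refine monotone_nat_of_le_succ fun j => ?_
  simp only [blockBound, j.succ_ne_zero, if_false]
  split_ifs with h0 _ hj hsucc hj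
  · exact Nat.zero_le _
  · exact Nat.zero_le _
  · exact hτ ⟨Nat.one_le_iff_ne_zero.2 h0, hj⟩ ⟨j.succ_pos, hsucc⟩ j.le_succ
  · exact (hτ ⟨Nat.one_le_iff_ne_zero.2 h0, hj⟩ ⟨hj.trans' (Nat.one_le_iff_ne_zero.2 h0), le_rfl⟩
      hj).trans hT
  · omega
  · exact le_rfl

lemma tsel_pos (Δ j : ℕ) : 1 ≤ tsel Δ j := Nat.le_add_left 1 _

lemma tsel_mono (Δ : ℕ) : Monotone (tsel Δ) := fun _ _ h => by
  unfold tsel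
  gcongr

lemma cast_tsel (Δ : ℕ) {j : ℕ} (hj : 1 ≤ j) : (tsel Δ j : ℝ) = ((j : ℝ) - 1) * Δ + 1 := by
  rw [tsel, Nat.cast_add, Nat.cast_mul, Nat.cast_sub hj]
  push_cast
  ring

section AoI

variable {V : Type*} (G : SimpleGraph V) (s : ℕ → V) (Δ k A0 : ℕ) (v : V)

noncomputable def arrivalTime (j : ℕ) : ℕ := tsel Δ j + G.dist (s j) v

lemma AoI_succ_le (t : ℕ) : AoI G s Δ k A0 v (t + 1) ≤ AoI G s Δ k A0 v t + 1 := by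
  rw [AoI]
  split_ifs with h
  · obtain ⟨j, hj⟩ := h
    exact (inf'_le _ hj).trans (by simp only [mem_filter] at hj; omega)
  · rfl

lemma AoI_succ_le_of_arrival {t j : ℕ} (hj : j ∈ Icc 1 k) (ht : t + 1 = arrivalTime G s Δ v j) :
    AoI G s Δ k A0 v (t + 1) ≤ 1 + G.dist (s j) v := by
  by_cases hprev : G.dist (s j) v + 1 ≤ AoI G s Δ k A0 v t
  · have hΩ : j ∈ (Icc 1 k).filter (fun x => t + 1 = tsel Δ x + G.dist (s x) v ∧
        G.dist (s x) v + 1 ≤ AoI G s Δ k A0 v t) := mem_filter.2 ⟨hj, ht, hprev⟩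
    rw [AoI, dif_pos ⟨j, hΩ⟩]
    exact inf'_le _ hΩ
  · have := AoI_succ_le G s Δ k A0 v t
    omega

lemma AoI_succ_eq_or_arrival (t : ℕ) :
    AoI G s Δ k A0 v (t + 1) = AoI G s Δ k A0 v t + 1 ∨ ∃ j ∈ Icc 1 k,
      t + 1 = arrivalTime G s Δ v j ∧ AoI G s Δ k A0 v (t + 1) = 1 + G.dist (s j) v := by
  rw [AoI]
  split_ifs with h
  · obtain ⟨j, hj, hmin⟩ := exists_mem_eq_inf' h (fun j => 1 + G.dist (s j) v)
    exact Or.inr ⟨j, (mem_filter.1 hj).1, (mem_filter.1 hj).2.1, hmin⟩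
  · exact Or.inl rfl

lemma AoI_add_tsel_le {j t : ℕ} (hj : j ∈ Icc 1 k) (ht : arrivalTime G s Δ v j ≤ t) :
    AoI G s Δ k A0 v t + tsel Δ j ≤ t + 1 := by
  induction t with
  | zero =>
    have := tsel_pos Δ j
    unfold arrivalTime at ht
    omega
  | succ t ih =>
    rcases ht.lt_or_eq with hlt | heq
    · have := AoI_succ_le G s Δ k A0 v t
      have := ih (by omega)
      omega
    · have := AoI_succ_le_of_arrival G s Δ k A0 v hj heq.symm
      unfold arrivalTime at heq
      omega

lemma AoI_eq_or_exists_arrived (t : ℕ) :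
    AoI G s Δ k A0 v t = A0 + t ∨ ∃ j ∈ Icc 1 k,
      arrivalTime G s Δ v j ≤ t ∧ AoI G s Δ k A0 v t + tsel Δ j = t + 1 := by
  induction t with
  | zero => exact Or.inl (by rw [AoI]; rfl)
  | succ t ih =>
    rcases AoI_succ_eq_or_arrival G s Δ k A0 v t with hstep | ⟨j, hj, harr, hA⟩
    · rcases ih with h | ⟨j, hj, harr, hA⟩
      · exact Or.inl (by omega)
      · exact Or.inr ⟨j, hj, by omega, by omega⟩
    · refine Or.inr ⟨j, hj, harr.ge, ?_⟩
      unfold arrivalTime at harr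
      omega

lemma mem_Dset {x : ℕ} : x ∈ Dset G s Δ k v ↔ x ∈ Icc 1 k ∧
    ∀ y ∈ Icc 1 k, x < y → arrivalTime G s Δ v x < arrivalTime G s Δ v y := by
  simp only [Dset, mem_filter, arrivalTime]

lemma Dset_subset_Icc : Dset G s Δ k v ⊆ Icc 1 k := fun _ hx => ((mem_Dset G s Δ k v).1 hx).1

lemma exists_mem_Dset_le_arrivalTime {x : ℕ} (hx : x ∈ Icc 1 k) :
    ∃ y ∈ Dset G s Δ k v, x ≤ y ∧ arrivalTime G s Δ v y ≤ arrivalTime G s Δ v x := by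
  classical
  -- the latest seed `y ≥ x` arriving no later than `x` survives
  obtain ⟨y, hy, hmax⟩ := ((Icc x k).filter
    (fun z => arrivalTime G s Δ v z ≤ arrivalTime G s Δ v x)).exists_max_image id
    ⟨x, mem_filter.2 ⟨mem_Icc.2 ⟨le_rfl, (mem_Icc.1 hx).2⟩, le_rfl⟩⟩
  simp only [mem_filter, mem_Icc] at hx hy hmax
  refine ⟨y, ?_, hy.1.1, hy.2⟩
  rw [mem_Dset]
  simp only [mem_Icc]
  refine ⟨⟨by omega, hy.1.2⟩, fun z hz hyz => ?_⟩
  by_contra! hzy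
  exact not_le_of_gt hyz (hmax z ⟨⟨by omega, hz.2⟩, hzy.trans hy.2⟩)

lemma arrivalTime_lt_of_mem_Dset {x y : ℕ} (hx : x ∈ Dset G s Δ k v) (hyk : y ≤ k)
    (hxy : x < y) : arrivalTime G s Δ v x < arrivalTime G s Δ v y :=
  ((mem_Dset G s Δ k v).1 hx).2 y
    (mem_Icc.2 ⟨(mem_Icc.1 (Dset_subset_Icc G s Δ k v hx)).1.trans hxy.le, hyk⟩) hxy

lemma self_mem_Dset (hk : 1 ≤ k) : k ∈ Dset G s Δ k v :=
  (mem_Dset G s Δ k v).2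
    ⟨mem_Icc.2 ⟨hk, le_rfl⟩, fun _ hy hky => absurd (mem_Icc.1 hy).2 hky.not_ge⟩

variable {G s Δ k A0 v} {i : ℕ → ℕ} {kv : ℕ}

lemma apply_mem_Dset (him : Dset G s Δ k v = (Icc 1 kv).image i) {m : ℕ}
    (hm : m ∈ Set.Icc 1 kv) : i m ∈ Dset G s Δ k v :=
  him ▸ mem_image_of_mem i (mem_Icc.2 hm)

lemma strictMonoOn_arrivalTime_comp (hmono : StrictMonoOn i (Set.Icc 1 kv))
    (him : Dset G s Δ k v = (Icc 1 kv).image i) :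
    StrictMonoOn (fun m => arrivalTime G s Δ v (i m)) (Set.Icc 1 kv) := fun _ hm _ hm' hlt =>
  arrivalTime_lt_of_mem_Dset G s Δ k v (apply_mem_Dset him hm)
    (mem_Icc.1 (Dset_subset_Icc G s Δ k v (apply_mem_Dset him hm'))).2 (hmono hm hm' hlt)

lemma one_le_and_apply_last_eq (hk : 1 ≤ k) (hmono : StrictMonoOn i (Set.Icc 1 kv))
    (him : Dset G s Δ k v = (Icc 1 kv).image i) : 1 ≤ kv ∧ i kv = k := by
  obtain ⟨m, hm, hmk⟩ := mem_image.1 (him ▸ self_mem_Dset G s Δ k v hk)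
  obtain ⟨hm1, hmkv⟩ := mem_Icc.1 hm
  have hkv : kv ∈ Set.Icc 1 kv := ⟨hm1.trans hmkv, le_rfl⟩
  refine ⟨hkv.1, le_antisymm ?_ (hmk ▸ hmono.monotoneOn ⟨hm1, hmkv⟩ hkv hmkv)⟩
  exact (mem_Icc.1 (Dset_subset_Icc G s Δ k v (apply_mem_Dset him hkv))).2

lemma exists_le_apply_of_arrivalTime_le (him : Dset G s Δ k v = (Icc 1 kv).image i) {j t : ℕ}
    (hj : j ∈ Icc 1 k) (ht : arrivalTime G s Δ v j ≤ t) :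
    ∃ m ∈ Set.Icc 1 kv, j ≤ i m ∧ arrivalTime G s Δ v (i m) ≤ t := by
  obtain ⟨y, hy, hjy, hyj⟩ := exists_mem_Dset_le_arrivalTime G s Δ k v hj
  obtain ⟨m, hm, rfl⟩ := mem_image.1 (him ▸ hy)
  exact ⟨m, mem_Icc.1 hm, hjy, hyj.trans ht⟩

lemma AoI_eq_of_lt_arrivalTime (hmono : StrictMonoOn i (Set.Icc 1 kv))
    (him : Dset G s Δ k v = (Icc 1 kv).image i) {t : ℕ}
    (ht : t < arrivalTime G s Δ v (i 1)) : AoI G s Δ k A0 v t = A0 + t := by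
  refine (AoI_eq_or_exists_arrived G s Δ k A0 v t).resolve_right ?_
  rintro ⟨j, hj, hjt, -⟩
  obtain ⟨m, hm, -, hmt⟩ := exists_le_apply_of_arrivalTime_le him hj hjt
  have := (strictMonoOn_arrivalTime_comp hmono him).monotoneOn ⟨le_rfl, hm.1.trans hm.2⟩ hm hm.1
  omega

lemma AoI_add_tsel_eq (hmono : StrictMonoOn i (Set.Icc 1 kv))
    (him : Dset G s Δ k v = (Icc 1 kv).image i) {m t : ℕ} (hm : m ∈ Set.Icc 1 kv)
    (hmt : arrivalTime G s Δ v (i m) ≤ t)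
    (hlast : ∀ m' ∈ Set.Icc 1 kv, arrivalTime G s Δ v (i m') ≤ t → m' ≤ m) :
    AoI G s Δ k A0 v t + tsel Δ (i m) = t + 1 := by
  refine le_antisymm (AoI_add_tsel_le G s Δ k A0 v (Dset_subset_Icc G s Δ k v
    (apply_mem_Dset him hm)) hmt) ?_
  rcases AoI_eq_or_exists_arrived G s Δ k A0 v t with h | ⟨j, hj, hjt, h⟩
  · have := tsel_pos Δ (i m)
    omega
  · obtain ⟨m', hm', hjm', hm't⟩ := exists_le_apply_of_arrivalTime_le him hj hjt
    have := tsel_mono Δ (hjm'.trans (hmono.monotoneOn hm' hm (hlast m' hm' hm't)))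
    omega

end AoI

section Blocks

variable {V : Type*} {G : SimpleGraph V} {s : ℕ → V} {Δ k A0 : ℕ} {v : V} {i : ℕ → ℕ} {kv T : ℕ}

local notation "B" => blockBound (fun m => arrivalTime G s Δ v (i m)) kv T

lemma cast_AoI_eq_of_mem_Ico_blockBound (hmono : StrictMonoOn i (Set.Icc 1 kv))
    (him : Dset G s Δ k v = (Icc 1 kv).image i) (hkv : 1 ≤ kv) {AA : ℕ → ℝ}
    (hAA0 : AA 0 = A0) (hAAj : ∀ j, 1 ≤ j → j ≤ kv → AA j = 1 + G.dist (s (i j)) v)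
    {j t : ℕ} (hj : j ∈ Icc 1 (kv + 1)) (ht : t ∈ Ico (B (j - 1)) (B j)) :
    (AoI G s Δ k A0 v t : ℝ) = AA (j - 1) + ((t : ℝ) - B (j - 1)) := by
  obtain ⟨hj1, hjkv⟩ := mem_Icc.1 hj
  obtain ⟨hlo, hhi⟩ := mem_Ico.1 ht
  obtain rfl | hj2 := hj1.eq_or_lt
  · rw [blockBound_of_le le_rfl hkv] at hhi
    rw [Nat.sub_self, blockBound_zero, AoI_eq_of_lt_arrivalTime hmono him hhi, hAA0]
    push_cast
    ring
  · obtain ⟨m, rfl⟩ : ∃ m, j = m + 1 := ⟨j - 1, by omega⟩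
    have hm1 : 1 ≤ m := by omega
    have hmkv : m ≤ kv := by omega
    rw [Nat.add_sub_cancel, blockBound_of_le hm1 hmkv] at hlo ⊢
    have hlast : ∀ m' ∈ Set.Icc 1 kv, arrivalTime G s Δ v (i m') ≤ t → m' ≤ m := by
      intro m' hm' hm't
      by_contra! hmm'
      rw [blockBound_of_le (Nat.le_add_left 1 m) (hmm'.trans_le hm'.2)] at hhi
      have := (strictMonoOn_arrivalTime_comp hmono him).monotoneOn
        ⟨Nat.le_add_left 1 m, hmm'.trans_le hm'.2⟩ hm' hmm'
      omega
    have hA : ((AoI G s Δ k A0 v t + tsel Δ (i m) : ℕ) : ℝ) = t + 1 := by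
      rw [AoI_add_tsel_eq hmono him ⟨hm1, hmkv⟩ hlo hlast]
      push_cast
      ring
    rw [hAAj m hm1 hmkv, arrivalTime]
    push_cast at hA ⊢
    linarith

lemma eq_blockBound_sub (him : Dset G s Δ k v = (Icc 1 kv).image i) (hkv : 1 ≤ kv)
    (hik : i kv = k) {Lam : ℕ → ℝ}
    (hLam1 : Lam 1 = 1 + (((i 1 - 1) * Δ : ℕ) : ℝ) + G.dist (s (i 1)) v)
    (hLamMid : ∀ j, 2 ≤ j → j ≤ kv →
      Lam j = ((i j : ℝ) - (i (j - 1) : ℝ)) * Δ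
        + G.dist (s (i j)) v - G.dist (s (i (j - 1))) v)
    (hLamEnd : Lam (kv + 1) = (T : ℝ) - 1 - (((k - 1) * Δ : ℕ) : ℝ) - G.dist (s k) v)
    {j : ℕ} (hj : j ∈ Icc 1 (kv + 1)) : Lam j = (B j : ℝ) - B (j - 1) := by
  obtain ⟨hj1, hjkv⟩ := mem_Icc.1 hj
  rcases (by omega : j = 1 ∨ (2 ≤ j ∧ j ≤ kv) ∨ j = kv + 1) with rfl | ⟨hj2, hjkv'⟩ | rfl
  · rw [Nat.sub_self, blockBound_zero, blockBound_of_le le_rfl hkv, hLam1, arrivalTime, tsel]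
    push_cast
    ring
  · have hi : ∀ m ∈ Set.Icc 1 kv, 1 ≤ i m := fun m hm =>
      (mem_Icc.1 (Dset_subset_Icc G s Δ k v (apply_mem_Dset him hm))).1
    rw [blockBound_of_le hj1 hjkv', blockBound_of_le (by omega) (by omega), hLamMid j hj2 hjkv',
      arrivalTime, arrivalTime]
    push_cast
    rw [cast_tsel Δ (hi j ⟨hj1, hjkv'⟩), cast_tsel Δ (hi (j - 1) ⟨by omega, by omega⟩)]
    ring
  · rw [Nat.add_sub_cancel, blockBound_of_lt (Nat.lt_succ_self kv), blockBound_of_le hkv le_rfl,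
      hLamEnd, hik, arrivalTime, tsel]
    push_cast
    ring

theorem sum_range_AoI_add_half (hk : 1 ≤ k) (hmono : StrictMonoOn i (Set.Icc 1 kv))
    (him : Dset G s Δ k v = (Icc 1 kv).image i) (hT : arrivalTime G s Δ v (i kv) ≤ T)
    {AA Lam : ℕ → ℝ} (hAA0 : AA 0 = A0)
    (hAAj : ∀ j, 1 ≤ j → j ≤ kv → AA j = 1 + G.dist (s (i j)) v)
    (hLam1 : Lam 1 = 1 + (((i 1 - 1) * Δ : ℕ) : ℝ) + G.dist (s (i 1)) v)
    (hLamMid : ∀ j, 2 ≤ j → j ≤ kv →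
      Lam j = ((i j : ℝ) - (i (j - 1) : ℝ)) * Δ
        + G.dist (s (i j)) v - G.dist (s (i (j - 1))) v)
    (hLamEnd : Lam (kv + 1) = (T : ℝ) - 1 - (((k - 1) * Δ : ℕ) : ℝ) - G.dist (s k) v) :
    ∑ t ∈ range T, ((AoI G s Δ k A0 v t : ℝ) + 1 / 2)
      = ∑ j ∈ Icc 1 (kv + 1), (2 * AA (j - 1) + Lam j) * Lam j / 2 := by
  obtain ⟨hkv, hik⟩ := one_le_and_apply_last_eq hk hmono him
  have hB : Monotone B :=
    blockBound_monotone (strictMonoOn_arrivalTime_comp hmono him).monotoneOn hT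
  rw [← blockBound_of_lt (τ := fun m => arrivalTime G s Δ v (i m)) (T := T) (Nat.lt_succ_self kv),
    sum_range_eq_sum_Icc_sum_Ico _ hB (blockBound_zero _ _ _)]
  refine sum_congr rfl fun j hj => ?_
  rw [sum_Ico_add_half_of_eq _ (hB (j.sub_le 1)) fun t ht =>
    cast_AoI_eq_of_mem_Ico_blockBound hmono him hkv hAA0 hAAj hj ht,
    eq_blockBound_sub him hkv hik hLam1 hLamMid hLamEnd hj]

end Blocks

theorem stmt5_general {V : Type*} [Fintype V] (G : SimpleGraph V)
    (s : ℕ → V) (Δ k A0 T : ℕ) (hk : 1 ≤ k)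
    (i : V → ℕ → ℕ) (kv : V → ℕ)
    (hmono : ∀ v, StrictMonoOn (i v) (Set.Icc 1 (kv v)))
    (him : ∀ v, Dset G s Δ k v = (Finset.Icc 1 (kv v)).image (i v))
    (hT : ∀ v, tsel Δ (i v (kv v)) + G.dist (s (i v (kv v))) v ≤ T)
    (AA : V → ℕ → ℝ) (Lam : V → ℕ → ℝ)
    (hAA0 : ∀ v, AA v 0 = A0)
    (hAAj : ∀ v, ∀ j, 1 ≤ j → j ≤ kv v → AA v j = 1 + G.dist (s (i v j)) v)
    (hLam1 : ∀ v, Lam v 1 = 1 + (((i v 1 - 1) * Δ : ℕ) : ℝ) + G.dist (s (i v 1)) v)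
    (hLamMid : ∀ v, ∀ j, 2 ≤ j → j ≤ kv v →
      Lam v j = ((i v j : ℝ) - (i v (j - 1) : ℝ)) * Δ
        + G.dist (s (i v j)) v - G.dist (s (i v (j - 1))) v)
    (hLamEnd : ∀ v, Lam v (kv v + 1)
      = (T : ℝ) - 1 - (((k - 1) * Δ : ℕ) : ℝ) - G.dist (s k) v) :
    (1 / ((Fintype.card V : ℝ) * T)) *
        ∑ v : V, ∫ t in (0:ℝ)..(T:ℝ), AoIR G s Δ k A0 v t
      = (1 / ((Fintype.card V : ℝ) * T)) *
        ∑ v : V, ∑ j ∈ Finset.Icc 1 (kv v + 1),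
          (2 * AA v (j - 1) + Lam v j) * Lam v j / 2 := by
  congr 1
  refine sum_congr rfl fun v _ => ?_
  exact (integral_floor_sawtooth (fun n => (AoI G s Δ k A0 v n : ℝ)) T).trans
    (sum_range_AoI_add_half hk (hmono v) (him v) (hT v) (hAA0 v) (hAAj v) (hLam1 v)
      (hLamMid v) (hLamEnd v))

theorem stmt5 {V : Type*} [Fintype V] (G : SimpleGraph V) (hconn : G.Connected)
    (s : ℕ → V) (Δ k A0 T : ℕ) (hΔ : 1 ≤ Δ) (hk : 1 ≤ k) (hA0 : 1 ≤ A0)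
    (i : V → ℕ → ℕ) (kv : V → ℕ)
    (hkv : ∀ v, kv v = (Dset G s Δ k v).card)
    (hi0 : ∀ v, i v 0 = 1)
    (hmono : ∀ v, StrictMonoOn (i v) (Set.Icc 1 (kv v)))
    (him : ∀ v, Dset G s Δ k v = (Finset.Icc 1 (kv v)).image (i v))
    (hT : ∀ v, tsel Δ (i v (kv v)) + G.dist (s (i v (kv v))) v ≤ T)
    (AA : V → ℕ → ℝ) (Lam : V → ℕ → ℝ)
    (hAA0 : ∀ v, AA v 0 = A0)
    (hAAj : ∀ v, ∀ j, 1 ≤ j → j ≤ kv v → AA v j = 1 + G.dist (s (i v j)) v)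
    (hLam1 : ∀ v, Lam v 1 = 1 + (((i v 1 - 1) * Δ : ℕ) : ℝ) + G.dist (s (i v 1)) v)
    (hLamMid : ∀ v, ∀ j, 2 ≤ j → j ≤ kv v →
      Lam v j = ((i v j : ℝ) - (i v (j - 1) : ℝ)) * Δ
        + G.dist (s (i v j)) v - G.dist (s (i v (j - 1))) v)
    (hLamEnd : ∀ v, Lam v (kv v + 1)
      = (T : ℝ) - 1 - (((k - 1) * Δ : ℕ) : ℝ) - G.dist (s k) v) :
    (1 / ((Fintype.card V : ℝ) * T)) *
        ∑ v : V, ∫ t in (0:ℝ)..(T:ℝ), AoIR G s Δ k A0 v t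
      = (1 / ((Fintype.card V : ℝ) * T)) *
        ∑ v : V, ∑ j ∈ Finset.Icc 1 (kv v + 1),
          (2 * AA v (j - 1) + Lam v j) * Lam v j / 2 :=
  stmt5_general G s Δ k A0 T hk i kv hmono him hT AA Lam hAA0 hAAj hLam1 hLamMid hLamEnd
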